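/- arXiv:2601.17624 — 2 statements merged into one kernel-verified Lean document; each statement's English description precedes it below -/
import Mathlib

section
/- Let (M,c) be a simple coloured binary matroid with M = M_1 ⊕_3 M_2 (a 3-sum along a common 3-element set), such that for each i = 1,2 we have ε(M | E(M_i)) > r(M_i) + 1 and M_i \ E(M_{3−i}) contains a rainbow circuit. Then M contains two disjoint rainbow circuits C_1, C_2 with |C_1| + |C_2| ≤ r(M) + 2. -/
open Matroid
open scoped symmDiff Classical

namespace RainbowPaper

variable {α : Type*} {κ : Type*}

/-- A circuit of a matroid: a minimal dependent set. -/
def Circuit (M : Matroid α) (C : Set α) : Prop :=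
  M.Dep C ∧ ∀ D, D ⊂ C → ¬ M.Dep D

/-- The rank of a set in a matroid: the supremum of the cardinalities of its
independent subsets. -/
noncomputable def rkSet (M : Matroid α) (X : Set α) : ℕ :=
  sSup {n | ∃ I, M.Indep I ∧ I ⊆ X ∧ I.ncard = n}

/-- The rank of a matroid. -/
noncomputable def rk (M : Matroid α) : ℕ := rkSet M M.E

/-- A matroid is simple if every subset of the ground set with at most two
elements is independent (no loops, no parallel pairs). -/
def Simple (M : Matroid α) : Prop := ∀ X ⊆ M.E, X.ncard ≤ 2 → M.Indep X

/-- A matroid is binary if it is representable over `GF(2)`. -/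
def IsBinary (M : Matroid α) : Prop :=
  ∃ (n : ℕ) (φ : α → (Fin n → ZMod 2)),
    ∀ I ⊆ M.E, (M.Indep I ↔ LinearIndependent (ZMod 2) (fun e : I => φ e.1))

/-- A matroid is regular if it is representable over every field. -/
def IsRegular (M : Matroid α) : Prop :=
  ∀ (F : Type) [Field F], ∃ (n : ℕ) (φ : α → (Fin n → F)),
    ∀ I ⊆ M.E, (M.Indep I ↔ LinearIndependent F (fun e : I => φ e.1))

/-- The signed incidence vector of an edge with given endpoints. -/
noncomputable def incVec {V : Type} (p : V × V) : V → ℚ :=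
  fun v => (if v = p.1 then (1 : ℚ) else 0) - (if v = p.2 then (1 : ℚ) else 0)

/-- A matroid is graphic if it is the cycle matroid of a graph, equivalently it is
represented by the signed incidence vectors of the edges of some graph. -/
def IsGraphic (M : Matroid α) : Prop :=
  ∃ (V : Type) (ends : α → V × V),
    ∀ I ⊆ M.E, (M.Indep I ↔ LinearIndependent ℚ (fun e : I => incVec (ends e.1)))

/-- A matroid is cographic if its dual is graphic. -/
def IsCographic (M : Matroid α) : Prop := IsGraphic M✶

/-- The colour class of the colour `s` in the coloured matroid `(M, c)`. -/
def colourClass (M : Matroid α) (c : α → κ) (s : κ) : Set α := {e ∈ M.E | c e = s}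

/-- A rainbow circuit: a circuit on which the colouring is injective. -/
def RainbowCircuit (M : Matroid α) (c : α → κ) (C : Set α) : Prop :=
  Circuit M C ∧ Set.InjOn c C

/-- A coloured matroid is circuit-achromatic if it has no rainbow circuit. -/
def CircuitAchromatic (M : Matroid α) (c : α → κ) : Prop :=
  ∀ C, Circuit M C → ¬ Set.InjOn c C

/-- The union of the first `j` colour classes in an enumeration `f` of the colours. -/
def initialUnion (M : Matroid α) (c : α → κ) {k : ℕ} (f : Fin k → κ) (j : Fin k) : Set α :=
  ⋃ i ∈ Set.Iic j, colourClass M c (f i)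

/-- A colouring of a matroid is stratified if its (nonempty) colour classes can be
enumerated `X_{i_1}, …, X_{i_k}` so that each initial union
`S_j = X_{i_1} ∪ ⋯ ∪ X_{i_j}` is closed and `1 ≤ r(S_1) < r(S_2) < ⋯ < r(S_k) = r(M)`. -/
def Stratified (M : Matroid α) (c : α → κ) : Prop :=
  ∃ (k : ℕ) (f : Fin k → κ),
    Function.Injective f ∧
    (∀ e ∈ M.E, ∃ j, c e = f j) ∧
    (∀ j, (colourClass M c (f j)).Nonempty) ∧
    (∀ j, M.closure (initialUnion M c f j) = initialUnion M c f j) ∧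
    StrictMono (fun j => rkSet M (initialUnion M c f j)) ∧
    (∀ j, 1 ≤ rkSet M (initialUnion M c f j)) ∧
    (∀ j : Fin k, j.val = k - 1 → rkSet M (initialUnion M c f j) = rk M)

/-- A short rainbow circuit pair: two disjoint rainbow circuits whose sizes sum
to at most `r(M) + 2`. -/
def SRCP (M : Matroid α) (c : α → κ) (C₁ C₂ : Set α) : Prop :=
  RainbowCircuit M c C₁ ∧ RainbowCircuit M c C₂ ∧ Disjoint C₁ C₂ ∧
    C₁.ncard + C₂.ncard ≤ rk M + 2

/-- A short rainbow circuit 4-tuple: four rainbow circuits of total size at most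
`2 r(M) + 4` such that no element belongs to more than two of them. -/
def SRC4 (M : Matroid α) (c : α → κ) (C : Fin 4 → Set α) : Prop :=
  (∀ i, RainbowCircuit M c (C i)) ∧
  (∑ i, (C i).ncard) ≤ 2 * rk M + 4 ∧
  (∀ e : α, (Finset.univ.filter (fun i => e ∈ C i)).card ≤ 2)

/-- A cycle of a matroid: a (pairwise) disjoint union of circuits. -/
def IsCycleSet (M : Matroid α) (X : Set α) : Prop :=
  ∃ 𝒞 : Set (Set α), (∀ C ∈ 𝒞, Circuit M C) ∧ 𝒞.PairwiseDisjoint id ∧ X = ⋃₀ 𝒞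

/-- The 3-sum of two binary matroids along a common 3-circuit `T`, described via
the cycle spaces: the ground set of `M` is the symmetric difference of the ground
sets, and the cycles of `M` are exactly the symmetric differences of a cycle of
`M₁` and a cycle of `M₂` lying in `E(M)`. -/
def ThreeSum (M M₁ M₂ : Matroid α) (T : Set α) : Prop :=
  M₁.E ∩ M₂.E = T ∧ T.ncard = 3 ∧ Circuit M₁ T ∧ Circuit M₂ T ∧
  M.E = (M₁.E ∪ M₂.E) \ T ∧
  ∀ X ⊆ M.E, (IsCycleSet M X ↔
    ∃ X₁ X₂, IsCycleSet M₁ X₁ ∧ IsCycleSet M₂ X₂ ∧ X = X₁ ∆ X₂)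

/-!
Write `A = E(M₁) - T` and `B = E(M₂) - T`. A shortest rainbow circuit `C` of `M` inside `A`
has `|C| ≤ r(A)`: otherwise `C - e` is a basis of `A` for every `e ∈ C`. Pick `f ∈ A - C` and let
`e ∈ C` share the colour of `f` (any `e` if none does); then `C - e + f` is rainbow and dependent,
so it contains a rainbow circuit `D`. Minimality forces `D = C - e + f`, and then `C ∆ D = {e, f}`
would be a nonempty cycle of the simple binary matroid `M`. Circuits of `M₁` inside `A` are cycles
of `M`, so `r_M(A) ≤ r(M₁) < |A| - 1` and `A` contains a rainbow circuit of `M`; hence such a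
`C₁ ⊆ A` exists, and likewise `C₂ ⊆ B`.

It remains to show `r(A) + r(B) ≤ r(M) + 2`, i.e. that the spans `⟨A⟩, ⟨B⟩` in a `GF(2)`-
representation meet in dimension at most `2`. A vector in both is a sum over `S₁ ⊆ A` and over
`S₂ ⊆ B`; then `S₁ ∪ S₂` is a cycle of `M`, hence `X₁ ∆ X₂` for cycles `Xᵢ` of `Mᵢ` with
`X₁ ∩ T = X₂ ∩ T` and `X₁ - T = S₁`. The trace `X₁ ∩ T` determines the vector, and the traces `∅`
and `T` both give `0`, so the intersection has at most `7` elements.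
-/

section Basic

variable {M : Matroid α} {C X : Set α}

@[simp] lemma circuit_iff_isCircuit : Circuit M C ↔ M.IsCircuit C := by
  rw [isCircuit_iff_forall_ssubset, Circuit]
  refine and_congr_right fun hC => forall₂_congr fun D hD => ?_
  exact not_dep_iff (hD.subset.trans hC.subset_ground)

lemma isCycleSet_of_isCircuit (hC : M.IsCircuit C) : IsCycleSet M C :=
  ⟨{C}, by simpa using hC, Set.pairwiseDisjoint_singleton _ _, (Set.sUnion_singleton C).symm⟩

lemma isCycleSet_empty (M : Matroid α) : IsCycleSet M ∅ :=
  ⟨∅, by simp, Set.pairwiseDisjoint_empty, Set.sUnion_empty.symm⟩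

lemma IsCycleSet.subset_ground (h : IsCycleSet M X) : X ⊆ M.E := by
  obtain ⟨𝒞, h𝒞, -, rfl⟩ := h
  exact Set.sUnion_subset fun C hC => (circuit_iff_isCircuit.1 (h𝒞 C hC)).subset_ground

lemma IsCycleSet.exists_isCircuit_subset (h : IsCycleSet M X) (hX : X.Nonempty) :
    ∃ C ⊆ X, M.IsCircuit C := by
  obtain ⟨𝒞, h𝒞, -, rfl⟩ := h
  obtain ⟨-, C, hC, -⟩ := hX
  exact ⟨C, Set.subset_sUnion_of_mem hC, circuit_iff_isCircuit.1 (h𝒞 C hC)⟩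

lemma IsCycleSet.union_isCircuit (hX : IsCycleSet M X) (hC : M.IsCircuit C)
    (hCX : Disjoint C X) : IsCycleSet M (C ∪ X) := by
  obtain ⟨𝒞, h𝒞, hdisj, rfl⟩ := hX
  refine ⟨insert C 𝒞, ?_, ?_, (Set.sUnion_insert C 𝒞).symm⟩
  · simpa [hC] using h𝒞
  · refine hdisj.insert fun D hD _ => ?_
    exact hCX.mono_right (Set.subset_sUnion_of_mem hD)

end Basic

section Rank

variable {M : Matroid α} {C I X : Set α}

lemma bddAbove_indep_ncard (hfin : M.E.Finite) (X : Set α) :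
    BddAbove {n | ∃ I, M.Indep I ∧ I ⊆ X ∧ I.ncard = n} := by
  refine ⟨M.E.ncard, ?_⟩
  rintro _ ⟨I, hI, -, rfl⟩
  exact Set.ncard_le_ncard hI.subset_ground hfin

lemma ncard_le_rkSet_of_indep (hfin : M.E.Finite) (hI : M.Indep I) (hIX : I ⊆ X) :
    I.ncard ≤ rkSet M X :=
  le_csSup (bddAbove_indep_ncard hfin X) ⟨I, hI, hIX, rfl⟩

lemma exists_indep_ncard_eq_rkSet (hfin : M.E.Finite) (X : Set α) :
    ∃ I, M.Indep I ∧ I ⊆ X ∧ I.ncard = rkSet M X :=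
  Nat.sSup_mem (s := {n | ∃ I, M.Indep I ∧ I ⊆ X ∧ I.ncard = n})
    ⟨0, ∅, M.empty_indep, Set.empty_subset X, Set.ncard_empty α⟩ (bddAbove_indep_ncard hfin X)

lemma ncard_le_rkSet_add_one_of_isCircuit (hfin : M.E.Finite) (hC : M.IsCircuit C) (hCX : C ⊆ X) :
    C.ncard ≤ rkSet M X + 1 := by
  obtain ⟨e, he⟩ := hC.nonempty
  have hle :=
    ncard_le_rkSet_of_indep hfin (hC.sdiff_singleton_indep he) (Set.sdiff_subset.trans hCX)
  have := Set.ncard_sdiff_singleton_add_one he (hfin.subset hC.subset_ground)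
  omega

end Rank

lemma finsum_mem_mem_span {R V : Type*} [Semiring R] [AddCommMonoid V] [Module R V]
    (φ : α → V) (S : Set α) : ∑ᶠ e ∈ S, φ e ∈ Submodule.span R (φ '' S) :=
  finsum_mem_induction (· ∈ Submodule.span R (φ '' S)) (Submodule.zero_mem _)
    (fun _ _ => Submodule.add_mem _) fun _ he => Submodule.subset_span (Set.mem_image_of_mem φ he)

section CharTwo

variable {V : Type*} [AddCommGroup V] [Module (ZMod 2) V]

lemma add_self_eq_zero_of_zmod_two (v : V) : v + v = 0 := by
  rw [← two_smul (ZMod 2), show (2 : ZMod 2) = 0 from rfl, zero_smul]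

lemma eq_of_add_eq_zero_of_zmod_two {v w : V} (h : v + w = 0) : v = w := by
  rw [← add_zero v, ← add_self_eq_zero_of_zmod_two w, ← add_assoc, h, zero_add]

variable {φ : α → V} {S T : Set α}

lemma finsum_mem_symmDiff (hS : S.Finite) (hT : T.Finite) :
    ∑ᶠ e ∈ S ∆ T, φ e = ∑ᶠ e ∈ S, φ e + ∑ᶠ e ∈ T, φ e := by
  have hdisj : Disjoint (S ∆ T) (S ∩ T) := disjoint_symmDiff_inf S T
  have hunion : ∑ᶠ e ∈ S ∪ T, φ e = ∑ᶠ e ∈ S ∆ T, φ e + ∑ᶠ e ∈ S ∩ T, φ e := by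
    rw [← finsum_mem_union hdisj ((hS.union hT).subset symmDiff_le_sup)
      (hS.inter_of_left T)]
    exact congrArg (fun U => ∑ᶠ e ∈ U, φ e) (symmDiff_sup_inf S T).symm
  rw [← finsum_mem_union_inter hS hT, hunion, add_assoc, add_self_eq_zero_of_zmod_two, add_zero]

lemma exists_finsum_eq_of_mem_span {v : V} (hv : v ∈ Submodule.span (ZMod 2) (φ '' S)) :
    ∃ T ⊆ S, T.Finite ∧ ∑ᶠ e ∈ T, φ e = v := by
  induction hv using Submodule.span_induction with
  | mem _ hx =>
    obtain ⟨e, he, rfl⟩ := hx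
    exact ⟨{e}, Set.singleton_subset_iff.2 he, Set.finite_singleton e, finsum_mem_singleton⟩
  | zero => exact ⟨∅, Set.empty_subset S, Set.finite_empty, finsum_mem_empty⟩
  | add x y _ _ hx hy =>
    obtain ⟨T₁, hT₁, hT₁fin, rfl⟩ := hx
    obtain ⟨T₂, hT₂, hT₂fin, rfl⟩ := hy
    exact ⟨T₁ ∆ T₂, symmDiff_le_sup.trans (Set.union_subset hT₁ hT₂),
      (hT₁fin.union hT₂fin).subset symmDiff_le_sup, finsum_mem_symmDiff hT₁fin hT₂fin⟩
  | smul a x _ hx =>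
    obtain ⟨T, hT, hTfin, rfl⟩ := hx
    obtain rfl | rfl : a = 0 ∨ a = 1 := by decide +revert
    · exact ⟨∅, Set.empty_subset S, Set.finite_empty, by rw [finsum_mem_empty, zero_smul]⟩
    · exact ⟨T, hT, hTfin, (one_smul _ _).symm⟩

end CharTwo

section BinaryRep

variable {V : Type*} [AddCommGroup V] [Module (ZMod 2) V]

def IsBinaryRep (M : Matroid α) (φ : α → V) : Prop :=
  ∀ I ⊆ M.E, M.Indep I ↔ LinearIndepOn (ZMod 2) φ I

namespace IsBinaryRep

variable {M : Matroid α} {φ : α → V} {C D S X : Set α}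

lemma dep_of_finsum_eq_zero (hφ : IsBinaryRep M φ) (hS : S ⊆ M.E) (hSfin : S.Finite)
    (hne : S.Nonempty) (h0 : ∑ᶠ e ∈ S, φ e = 0) : M.Dep S := by
  obtain ⟨x, hx⟩ := hne
  refine ⟨fun hI => ?_, hS⟩
  have hli := (hφ S hS).1 hI
  rw [← Set.insert_sdiff_self_of_mem hx] at hli h0
  rw [finsum_mem_insert _ (Set.notMem_sdiff_of_mem (Set.mem_singleton x)) hSfin.sdiff] at h0
  refine ((linearIndepOn_insert (Set.notMem_sdiff_of_mem (Set.mem_singleton x))).1 hli).2 ?_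
  exact eq_of_add_eq_zero_of_zmod_two h0 ▸ finsum_mem_mem_span φ _

lemma finsum_eq_zero_of_isCircuit (hφ : IsBinaryRep M φ) (hC : M.IsCircuit C) :
    ∑ᶠ e ∈ C, φ e = 0 := by
  obtain ⟨e, he⟩ := hC.nonempty
  have heC : e ∉ C \ {e} := Set.notMem_sdiff_of_mem (Set.mem_singleton e)
  have hspan : φ e ∈ Submodule.span (ZMod 2) (φ '' (C \ {e})) := by
    by_contra hnot
    refine hC.not_indep ((hφ C hC.subset_ground).2 ?_)
    rw [← Set.insert_sdiff_self_of_mem he, linearIndepOn_insert heC]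
    exact ⟨(hφ _ (Set.sdiff_subset.trans hC.subset_ground)).1 (hC.sdiff_singleton_indep he), hnot⟩
  obtain ⟨S, hS, hSfin, hSsum⟩ := exists_finsum_eq_of_mem_span hspan
  have heS : e ∉ S := fun h => heC (hS h)
  have h0 : ∑ᶠ x ∈ insert e S, φ x = 0 := by
    rw [finsum_mem_insert _ heS hSfin, hSsum, add_self_eq_zero_of_zmod_two]
  have hSC : insert e S ⊆ C := Set.insert_subset he (hS.trans Set.sdiff_subset)
  have hdep := hφ.dep_of_finsum_eq_zero (hSC.trans hC.subset_ground) (hSfin.insert e)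
    (Set.insert_nonempty e S) h0
  rwa [hC.eq_of_dep_subset hdep hSC] at h0

lemma finsum_eq_zero_of_isCycleSet (hφ : IsBinaryRep M φ) (hX : IsCycleSet M X)
    (hXfin : X.Finite) : ∑ᶠ e ∈ X, φ e = 0 := by
  obtain ⟨𝒞, h𝒞, hdisj, rfl⟩ := hX
  have hfin : ∀ C ∈ 𝒞, C.Finite := fun C hC => hXfin.subset (Set.subset_sUnion_of_mem hC)
  rw [finsum_mem_sUnion hdisj
    (hXfin.finite_subsets.subset fun C hC => Set.subset_sUnion_of_mem hC) hfin]
  exact finsum_mem_of_eqOn_zero fun C hC =>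
    hφ.finsum_eq_zero_of_isCircuit (circuit_iff_isCircuit.1 (h𝒞 C hC))

lemma isCycleSet_of_finsum_eq_zero (hφ : IsBinaryRep M φ) (hS : S ⊆ M.E) (hSfin : S.Finite)
    (h0 : ∑ᶠ e ∈ S, φ e = 0) : IsCycleSet M S := by
  induction h : S.ncard using Nat.strong_induction_on generalizing S with
  | _ n ih =>
  obtain rfl | hne := S.eq_empty_or_nonempty
  · exact isCycleSet_empty M
  obtain ⟨C, hCS, hC⟩ := (hφ.dep_of_finsum_eq_zero hS hSfin hne h0).exists_isCircuit_subset
  have hdisj : Disjoint C (S \ C) := Set.disjoint_sdiff_right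
  have hrest : ∑ᶠ e ∈ S \ C, φ e = 0 := by
    rwa [← Set.union_sdiff_cancel hCS, finsum_mem_union hdisj (hSfin.subset hCS) hSfin.sdiff,
      hφ.finsum_eq_zero_of_isCircuit hC, zero_add] at h0
  have hlt : (S \ C).ncard < n := h ▸ Set.ncard_lt_ncard
    (Set.sdiff_ssubset_left_iff.2 (by rw [Set.inter_eq_right.2 hCS]; exact hC.nonempty)) hSfin
  rw [← Set.union_sdiff_cancel hCS]
  exact (ih _ hlt (Set.sdiff_subset.trans hS) hSfin.sdiff hrest rfl).union_isCircuit hC hdisj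

lemma two_lt_ncard_symmDiff (hφ : IsBinaryRep M φ) (hsimple : Simple M) (hC : M.IsCircuit C)
    (hD : M.IsCircuit D) (hCD : C ≠ D) (hCfin : C.Finite) (hDfin : D.Finite) :
    2 < (C ∆ D).ncard := by
  have hsub : C ∆ D ⊆ M.E :=
    symmDiff_le_sup.trans (Set.union_subset hC.subset_ground hD.subset_ground)
  have hdep : M.Dep (C ∆ D) := by
    refine hφ.dep_of_finsum_eq_zero hsub ((hCfin.union hDfin).subset symmDiff_le_sup)
      (Set.nonempty_iff_ne_empty.2 fun h => hCD (symmDiff_eq_bot.1 h)) ?_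
    rw [finsum_mem_symmDiff hCfin hDfin, hφ.finsum_eq_zero_of_isCircuit hC,
      hφ.finsum_eq_zero_of_isCircuit hD, add_zero]
  by_contra! hle
  exact hdep.not_indep (hsimple _ hsub hle)

lemma rkSet_eq_finrank_span (hφ : IsBinaryRep M φ) (hfin : M.E.Finite) (hX : X ⊆ M.E) :
    rkSet M X = Module.finrank (ZMod 2) (Submodule.span (ZMod 2) (φ '' X)) := by
  obtain ⟨I, hI, hIX, hcard⟩ := exists_indep_ncard_eq_rkSet hfin X
  have hIfin : I.Finite := hfin.subset hI.subset_ground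
  have hli : LinearIndepOn (ZMod 2) φ I := (hφ I hI.subset_ground).1 hI
  have hspan : Submodule.span (ZMod 2) (φ '' X) = Submodule.span (ZMod 2) (φ '' I) := by
    refine le_antisymm (Submodule.span_le.2 ?_) (Submodule.span_mono (Set.image_mono hIX))
    rintro _ ⟨x, hx, rfl⟩
    by_cases hxI : x ∈ I
    · exact Submodule.subset_span (Set.mem_image_of_mem φ hxI)
    by_contra hnot
    have hind : M.Indep (insert x I) := (hφ _ (Set.insert_subset (hX hx) hI.subset_ground)).2
      ((linearIndepOn_insert hxI).2 ⟨hli, hnot⟩)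
    have hle := ncard_le_rkSet_of_indep hfin hind (Set.insert_subset hx hIX)
    rw [Set.ncard_insert_of_notMem hxI hIfin] at hle
    omega
  have := hIfin.fintype
  rw [hspan, ← hcard, Set.image_eq_range, finrank_span_eq_card hli, ← Nat.card_eq_fintype_card,
    Nat.card_coe_set_eq]

end IsBinaryRep

end BinaryRep

section Rainbow

variable {c : α → κ}

lemma exists_mem_injOn_insert_sdiff {C : Set α} {f : α} (hC : C.Nonempty) (hCc : Set.InjOn c C)
    (hf : f ∉ C) : ∃ e ∈ C, Set.InjOn c (insert f (C \ {e})) := by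
  by_cases hmate : ∃ x ∈ C, c x = c f
  · obtain ⟨x, hx, hcx⟩ := hmate
    refine ⟨x, hx, (Set.injOn_insert fun h => hf h.1).2 ⟨hCc.mono Set.sdiff_subset, ?_⟩⟩
    rintro ⟨y, hy, hcy⟩
    exact hy.2 (hCc hy.1 hx (hcy.trans hcx.symm))
  · push Not at hmate
    obtain ⟨e, he⟩ := hC
    refine ⟨e, he, (Set.injOn_insert fun h => hf h.1).2 ⟨hCc.mono Set.sdiff_subset, ?_⟩⟩
    rintro ⟨y, hy, hcy⟩
    exact hmate y hy.1 hcy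

variable {V : Type*} [AddCommGroup V] [Module (ZMod 2) V] {M : Matroid α} {φ : α → V}
  {A C : Set α}

lemma IsBinaryRep.exists_rainbow_isCircuit_ncard_lt (hφ : IsBinaryRep M φ) (hfin : M.E.Finite)
    (hsimple : Simple M) (hA : A ⊆ M.E) (hC : M.IsCircuit C) (hCA : C ⊆ A)
    (hCc : Set.InjOn c C) (hCcard : C.ncard = rkSet M A + 1) {f : α} (hfA : f ∈ A)
    (hfC : f ∉ C) : ∃ D ⊆ A, M.IsCircuit D ∧ Set.InjOn c D ∧ D.ncard < C.ncard := by
  obtain ⟨e, heC, hinj⟩ := exists_mem_injOn_insert_sdiff hC.nonempty hCc hfC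
  have hCfin : C.Finite := hfin.subset hC.subset_ground
  set D' := insert f (C \ {e})
  have hD'fin : D'.Finite := hCfin.sdiff.insert f
  have hD'card : D'.ncard = C.ncard := by
    rw [Set.ncard_insert_of_notMem (fun h => hfC h.1) hCfin.sdiff,
      Set.ncard_sdiff_singleton_add_one heC hCfin]
  have hD'A : D' ⊆ A := Set.insert_subset hfA (Set.sdiff_subset.trans hCA)
  have hdep : M.Dep D' := by
    refine ⟨fun hind => ?_, hD'A.trans hA⟩
    have := ncard_le_rkSet_of_indep hfin hind hD'A
    omega
  obtain ⟨D, hDD', hD⟩ := hdep.exists_isCircuit_subset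
  refine ⟨D, hDD'.trans hD'A, hD, hinj.mono hDD', lt_of_not_ge fun hle => ?_⟩
  have hDeq : D = D' := Set.eq_of_subset_of_ncard_le hDD' (hD'card ▸ hle) hD'fin
  have hsd : C ∆ D ⊆ {e, f} := by
    rintro x (⟨hxC, hxD⟩ | ⟨hxD, hxC⟩)
    · by_contra hx
      exact hxD (hDeq ▸ Set.mem_insert_of_mem f ⟨hxC, fun h => hx (Or.inl h)⟩)
    · rcases hDeq ▸ hxD with rfl | hx
      exacts [Or.inr rfl, absurd hx.1 hxC]
  have hlt := hφ.two_lt_ncard_symmDiff hsimple hC hD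
    (fun h => hfC (h ▸ hDeq ▸ Set.mem_insert f _)) hCfin (hDeq ▸ hD'fin)
  have hpair := (Set.ncard_le_ncard hsd (Set.toFinite _)).trans (Set.ncard_insert_le e {f})
  rw [Set.ncard_singleton] at hpair
  omega

lemma IsBinaryRep.exists_rainbow_isCircuit_ncard_le_rkSet (hφ : IsBinaryRep M φ)
    (hfin : M.E.Finite) (hsimple : Simple M) (hA : A ⊆ M.E) (hbig : rkSet M A + 2 ≤ A.ncard)
    (hex : ∃ C ⊆ A, M.IsCircuit C ∧ Set.InjOn c C) :
    ∃ C ⊆ A, M.IsCircuit C ∧ Set.InjOn c C ∧ C.ncard ≤ rkSet M A := by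
  have hP : ∃ n, ∃ C ⊆ A, M.IsCircuit C ∧ Set.InjOn c C ∧ C.ncard = n :=
    let ⟨C, hCA, hC, hCc⟩ := hex
    ⟨C.ncard, C, hCA, hC, hCc, rfl⟩
  obtain ⟨C, hCA, hC, hCc, hCn⟩ := Nat.find_spec hP
  refine ⟨C, hCA, hC, hCc, not_lt.1 fun hlong => ?_⟩
  have hle := ncard_le_rkSet_add_one_of_isCircuit hfin hC hCA
  obtain ⟨f, hfA, hfC⟩ : (A \ C).Nonempty := Set.sdiff_nonempty.2 fun hAC => by
    have := Set.ncard_le_ncard hAC (hfin.subset hC.subset_ground)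
    omega
  obtain ⟨D, hDA, hD, hDc, hDlt⟩ :=
    hφ.exists_rainbow_isCircuit_ncard_lt hfin hsimple hA hC hCA hCc (by omega) hfA hfC
  exact Nat.find_min hP (hCn ▸ hDlt) ⟨D, hDA, hD, hDc, rfl⟩

end Rainbow

namespace ThreeSum

variable {M M₁ M₂ : Matroid α} {T C I X X₁ X₂ : Set α}

lemma symm (h : ThreeSum M M₁ M₂ T) : ThreeSum M M₂ M₁ T := by
  obtain ⟨hT, hT3, hT₁, hT₂, hE, hcyc⟩ := h
  refine ⟨Set.inter_comm M₁.E M₂.E ▸ hT, hT3, hT₂, hT₁, Set.union_comm M₁.E M₂.E ▸ hE,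
    fun X hX => (hcyc X hX).trans ?_⟩
  constructor <;> rintro ⟨X₁, X₂, h₁, h₂, rfl⟩ <;> exact ⟨X₂, X₁, h₂, h₁, symmDiff_comm _ _⟩

lemma sdiff_subset_ground (h : ThreeSum M M₁ M₂ T) : M₁.E \ T ⊆ M.E :=
  h.2.2.2.2.1 ▸ Set.sdiff_subset_sdiff_left Set.subset_union_left

lemma disjoint_sdiff (h : ThreeSum M M₁ M₂ T) : Disjoint (M₁.E \ T) (M₂.E \ T) :=
  Set.disjoint_left.2 fun _ hx₁ hx₂ => hx₁.2 (h.1 ▸ ⟨hx₁.1, hx₂.1⟩)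

lemma sdiff_eq (h : ThreeSum M M₁ M₂ T) : M₁.E \ M₂.E = M₁.E \ T := by
  rw [← h.1, Set.sdiff_self_inter]

lemma finite_triangle (h : ThreeSum M M₁ M₂ T) : T.Finite :=
  Set.finite_of_ncard_ne_zero (by rw [h.2.1]; decide)

lemma finite_ground_left (h : ThreeSum M M₁ M₂ T) (hfin : M.E.Finite) : M₁.E.Finite :=
  ((hfin.subset h.sdiff_subset_ground).union h.finite_triangle).subset
    (Set.subset_sdiff_union M₁.E T)

lemma isCycleSet_of_isCycleSet_left (h : ThreeSum M M₁ M₂ T) (hX : IsCycleSet M₁ X)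
    (hXT : X ⊆ M₁.E \ T) : IsCycleSet M X :=
  (h.2.2.2.2.2 X (hXT.trans h.sdiff_subset_ground)).2
    ⟨X, ∅, hX, isCycleSet_empty M₂, (symmDiff_bot X).symm⟩

lemma exists_isCircuit_subset_of_isCircuit_left (h : ThreeSum M M₁ M₂ T) (hC : M₁.IsCircuit C)
    (hCT : C ⊆ M₁.E \ T) : ∃ C' ⊆ C, M.IsCircuit C' :=
  (h.isCycleSet_of_isCycleSet_left (isCycleSet_of_isCircuit hC) hCT).exists_isCircuit_subset
    hC.nonempty

lemma indep_left_of_indep (h : ThreeSum M M₁ M₂ T) (hI : M.Indep I) (hIT : I ⊆ M₁.E \ T) :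
    M₁.Indep I := by
  by_contra hnot
  have hdep : M₁.Dep I := ⟨hnot, hIT.trans Set.sdiff_subset⟩
  obtain ⟨C, hCI, hC⟩ := hdep.exists_isCircuit_subset
  obtain ⟨C', hC'C, hC'⟩ := h.exists_isCircuit_subset_of_isCircuit_left hC (hCI.trans hIT)
  exact hC'.not_indep (hI.subset (hC'C.trans hCI))

lemma rkSet_sdiff_le_rk_left (h : ThreeSum M M₁ M₂ T) (hfin : M.E.Finite) :
    rkSet M (M₁.E \ T) ≤ rk M₁ := by
  obtain ⟨I, hI, hIT, hcard⟩ := exists_indep_ncard_eq_rkSet hfin (M₁.E \ T)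
  have hI₁ := h.indep_left_of_indep hI hIT
  exact hcard ▸ ncard_le_rkSet_of_indep (h.finite_ground_left hfin) hI₁ hI₁.subset_ground

variable {V : Type*} [AddCommGroup V] [Module (ZMod 2) V] {φ : α → V}

lemma finsum_sdiff_eq_of_inter_eq (h : ThreeSum M M₁ M₂ T) (hφ : IsBinaryRep M φ)
    (hfin : M.E.Finite) (hX₁ : IsCycleSet M₁ X₁) (hX₂ : IsCycleSet M₂ X₂)
    (hX : X₁ ∩ T = X₂ ∩ T) : ∑ᶠ e ∈ X₁ \ T, φ e = ∑ᶠ e ∈ X₂ \ T, φ e := by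
  have ⟨hT, _, _, _, _, hcyc⟩ := h
  have hsd : X₁ ∆ X₂ = (X₁ \ T) ∪ (X₂ \ T) := by
    ext x
    have := Set.ext_iff.1 hX x
    have := Set.ext_iff.1 hT x
    have : x ∈ X₁ → x ∈ M₁.E := fun hx => hX₁.subset_ground hx
    have : x ∈ X₂ → x ∈ M₂.E := fun hx => hX₂.subset_ground hx
    simp only [Set.mem_inter_iff, Set.mem_sdiff, Set.mem_union, Set.mem_symmDiff] at *
    tauto
  have hsub₁ : X₁ \ T ⊆ M.E :=
    (Set.sdiff_subset_sdiff_left hX₁.subset_ground).trans h.sdiff_subset_ground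
  have hsub₂ : X₂ \ T ⊆ M.E :=
    (Set.sdiff_subset_sdiff_left hX₂.subset_ground).trans h.symm.sdiff_subset_ground
  have hX₁₂ : IsCycleSet M (X₁ ∆ X₂) :=
    (hcyc _ (hsd ▸ Set.union_subset hsub₁ hsub₂)).2 ⟨X₁, X₂, hX₁, hX₂, rfl⟩
  have h0 := hφ.finsum_eq_zero_of_isCycleSet hX₁₂ (hfin.subset hX₁₂.subset_ground)
  rw [hsd, finsum_mem_union (h.disjoint_sdiff.mono (Set.sdiff_subset_sdiff_left hX₁.subset_ground)
    (Set.sdiff_subset_sdiff_left hX₂.subset_ground)) (hfin.subset hsub₁) (hfin.subset hsub₂)] at h0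
  exact eq_of_add_eq_zero_of_zmod_two h0

lemma exists_isCycleSet_of_mem_inf (h : ThreeSum M M₁ M₂ T) (hφ : IsBinaryRep M φ) {v : V}
    (hv : v ∈ Submodule.span (ZMod 2) (φ '' (M₁.E \ T)) ⊓
      Submodule.span (ZMod 2) (φ '' (M₂.E \ T))) :
    ∃ X₁ X₂, IsCycleSet M₁ X₁ ∧ IsCycleSet M₂ X₂ ∧ X₁ ∩ T = X₂ ∩ T ∧ ∑ᶠ e ∈ X₁ \ T, φ e = v := by
  have ⟨hT, _, _, _, _, hcyc⟩ := h
  obtain ⟨S₁, hS₁, hS₁fin, rfl⟩ := exists_finsum_eq_of_mem_span hv.1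
  obtain ⟨S₂, hS₂, hS₂fin, hS₂v⟩ := exists_finsum_eq_of_mem_span hv.2
  have hsub : S₁ ∪ S₂ ⊆ M.E :=
    Set.union_subset (hS₁.trans h.sdiff_subset_ground) (hS₂.trans h.symm.sdiff_subset_ground)
  have hS : IsCycleSet M (S₁ ∪ S₂) := by
    refine hφ.isCycleSet_of_finsum_eq_zero hsub (hS₁fin.union hS₂fin) ?_
    rw [finsum_mem_union (h.disjoint_sdiff.mono hS₁ hS₂) hS₁fin hS₂fin, hS₂v,
      add_self_eq_zero_of_zmod_two]
  obtain ⟨X₁, X₂, hX₁, hX₂, hX⟩ := (hcyc _ hsub).1 hS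
  have hmem : ∀ x, (x ∈ X₁ ∩ T ↔ x ∈ X₂ ∩ T) ∧ (x ∈ X₁ \ T ↔ x ∈ S₁) := by
    intro x
    have := Set.ext_iff.1 hX x
    have := Set.ext_iff.1 hT x
    have : x ∈ X₁ → x ∈ M₁.E := fun hx => hX₁.subset_ground hx
    have : x ∈ X₂ → x ∈ M₂.E := fun hx => hX₂.subset_ground hx
    have := @hS₁ x
    have := @hS₂ x
    simp only [Set.mem_inter_iff, Set.mem_sdiff, Set.mem_union, Set.mem_symmDiff] at *
    tauto
  exact ⟨X₁, X₂, hX₁, hX₂, Set.ext fun x => (hmem x).1,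
    congrArg (fun S => ∑ᶠ e ∈ S, φ e) (Set.ext fun x => (hmem x).2)⟩

lemma ncard_inf_le_seven (h : ThreeSum M M₁ M₂ T) (hφ : IsBinaryRep M φ) (hfin : M.E.Finite) :
    ((Submodule.span (ZMod 2) (φ '' (M₁.E \ T)) ⊓ Submodule.span (ZMod 2) (φ '' (M₂.E \ T)) :
      Submodule (ZMod 2) V) : Set V).ncard ≤ 7 := by
  set W := Submodule.span (ZMod 2) (φ '' (M₁.E \ T)) ⊓ Submodule.span (ZMod 2) (φ '' (M₂.E \ T))
  have ⟨_, hT3, hT₁, hT₂, _, _⟩ := h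
  let R : V → Set α → Prop := fun v σ => ∃ X₁ X₂, IsCycleSet M₁ X₁ ∧ IsCycleSet M₂ X₂ ∧
    X₁ ∩ T = σ ∧ X₂ ∩ T = σ ∧ ∑ᶠ e ∈ X₁ \ T, φ e = v
  have hR : ∀ v w σ, R v σ → R w σ → v = w := by
    rintro v w σ ⟨X₁, -, hX₁, -, hX₁T, -, rfl⟩ ⟨Y₁, Y₂, hY₁, hY₂, hY₁T, hY₂T, rfl⟩
    rw [h.finsum_sdiff_eq_of_inter_eq hφ hfin hX₁ hY₂ (hX₁T.trans hY₂T.symm),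
      h.finsum_sdiff_eq_of_inter_eq hφ hfin hY₁ hY₂ (hY₁T.trans hY₂T.symm)]
  have hR₀ : R 0 ∅ := ⟨∅, ∅, isCycleSet_empty M₁, isCycleSet_empty M₂, Set.empty_inter T,
    Set.empty_inter T, by rw [Set.empty_sdiff, finsum_mem_empty]⟩
  have hRT : R 0 T := ⟨T, T, isCycleSet_of_isCircuit (circuit_iff_isCircuit.1 hT₁),
    isCycleSet_of_isCircuit (circuit_iff_isCircuit.1 hT₂), Set.inter_self T,
    Set.inter_self T, by rw [Set.sdiff_self, finsum_mem_empty]⟩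
  have hex : ∀ v ∈ W, ∃ σ ∈ 𝒫 T \ {T}, R v σ := by
    intro v hv
    obtain ⟨X₁, X₂, hX₁, hX₂, hX, hv⟩ := h.exists_isCycleSet_of_mem_inf hφ hv
    by_cases hXT : X₁ ∩ T = T
    · have hT₀ : (∅ : Set α) ≠ T := fun h₀ => by subst h₀; simp at hT3
      exact ⟨∅, ⟨Set.empty_subset T, hT₀⟩,
        hR 0 v T hRT ⟨X₁, X₂, hX₁, hX₂, hXT, hX ▸ hXT, hv⟩ ▸ hR₀⟩
    · exact ⟨X₁ ∩ T, ⟨Set.inter_subset_right, hXT⟩, X₁, X₂, hX₁, hX₂, rfl, hX.symm, hv⟩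
  choose! σ hσ using hex
  calc (W : Set V).ncard ≤ (𝒫 T \ {T}).ncard :=
        Set.ncard_le_ncard_of_injOn σ (fun v hv => (hσ v hv).1)
          (fun v hv w hw hvw => hR v w (σ v) (hσ v hv).2 (hvw ▸ (hσ w hw).2))
          h.finite_triangle.powerset.sdiff
    _ = 7 := by
        rw [Set.ncard_sdiff_singleton_of_mem (Set.mem_powerset subset_rfl),
          Set.ncard_powerset T h.finite_triangle, hT3]
        rfl

lemma finrank_inf_le_two (h : ThreeSum M M₁ M₂ T) (hφ : IsBinaryRep M φ) (hfin : M.E.Finite) :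
    Module.finrank (ZMod 2) ↥(Submodule.span (ZMod 2) (φ '' (M₁.E \ T)) ⊓
      Submodule.span (ZMod 2) (φ '' (M₂.E \ T))) ≤ 2 := by
  set W := Submodule.span (ZMod 2) (φ '' (M₁.E \ T)) ⊓ Submodule.span (ZMod 2) (φ '' (M₂.E \ T))
  have hcard : (W : Set V).ncard ≤ 7 := h.ncard_inf_le_seven hφ hfin
  have : FiniteDimensional (ZMod 2) (Submodule.span (ZMod 2) (φ '' (M₁.E \ T))) :=
    FiniteDimensional.span_of_finite _ ((hfin.subset h.sdiff_subset_ground).image φ)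
  have hpow := Module.natCard_eq_pow_finrank (K := ZMod 2) (V := W)
  rw [Nat.card_zmod, show Nat.card W = (W : Set V).ncard from Nat.card_coe_set_eq _] at hpow
  by_contra! hlt
  have := Nat.pow_le_pow_right two_pos hlt
  omega

lemma rkSet_add_rkSet_le (h : ThreeSum M M₁ M₂ T) (hφ : IsBinaryRep M φ) (hfin : M.E.Finite) :
    rkSet M (M₁.E \ T) + rkSet M (M₂.E \ T) ≤ rk M + 2 := by
  have hsub₁ := h.sdiff_subset_ground
  have hsub₂ := h.symm.sdiff_subset_ground
  have : FiniteDimensional (ZMod 2) (Submodule.span (ZMod 2) (φ '' (M₁.E \ T))) :=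
    FiniteDimensional.span_of_finite _ ((hfin.subset hsub₁).image φ)
  have : FiniteDimensional (ZMod 2) (Submodule.span (ZMod 2) (φ '' (M₂.E \ T))) :=
    FiniteDimensional.span_of_finite _ ((hfin.subset hsub₂).image φ)
  have : FiniteDimensional (ZMod 2) (Submodule.span (ZMod 2) (φ '' M.E)) :=
    FiniteDimensional.span_of_finite _ (hfin.image φ)
  have hsup : Module.finrank (ZMod 2) ↥(Submodule.span (ZMod 2) (φ '' (M₁.E \ T)) ⊔
      Submodule.span (ZMod 2) (φ '' (M₂.E \ T))) ≤ rk M := by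
    rw [rk, hφ.rkSet_eq_finrank_span hfin subset_rfl]
    exact Submodule.finrank_mono (sup_le (Submodule.span_mono (Set.image_mono hsub₁))
      (Submodule.span_mono (Set.image_mono hsub₂)))
  rw [hφ.rkSet_eq_finrank_span hfin hsub₁, hφ.rkSet_eq_finrank_span hfin hsub₂,
    ← Submodule.finrank_sup_add_finrank_inf_eq]
  have := h.finrank_inf_le_two hφ hfin
  omega

lemma exists_rainbow_isCircuit_left {c : α → κ} (h : ThreeSum M M₁ M₂ T) (hφ : IsBinaryRep M φ)
    (hfin : M.E.Finite) (hsimple : Simple M) (hsize : rk M₁ + 1 < (M₁.E \ T).ncard)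
    (hex : ∃ C, Circuit (M₁ ↾ (M₁.E \ M₂.E)) C ∧ Set.InjOn c C) :
    ∃ C ⊆ M₁.E \ T, M.IsCircuit C ∧ Set.InjOn c C ∧ C.ncard ≤ rkSet M (M₁.E \ T) := by
  obtain ⟨C, hC, hCc⟩ := hex
  rw [circuit_iff_isCircuit, h.sdiff_eq, restrict_isCircuit_iff Set.sdiff_subset] at hC
  obtain ⟨C', hC'C, hC'⟩ := h.exists_isCircuit_subset_of_isCircuit_left hC.1 hC.2
  have := h.rkSet_sdiff_le_rk_left hfin
  exact hφ.exists_rainbow_isCircuit_ncard_le_rkSet hfin hsimple h.sdiff_subset_ground (by omega)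
    ⟨C', hC'C.trans hC.2, hC', hCc.mono hC'C⟩

end ThreeSum

/-- a simple coloured binary matroid which is a 3-sum such that both
parts are large and contain rainbow circuits has a short rainbow circuit pair. -/
theorem srcp_of_threeSum (M M₁ M₂ : Matroid α) (T : Set α)
    (hM : IsBinary M) (hfin : M.E.Finite) (hsimple : Simple M)
    (hsum : ThreeSum M M₁ M₂ T) (c : α → κ)
    (hsize₁ : rk M₁ + 1 < (M₁.E \ T).ncard)
    (hsize₂ : rk M₂ + 1 < (M₂.E \ T).ncard)
    (h₁ : ∃ C, Circuit (M₁ ↾ (M₁.E \ M₂.E)) C ∧ Set.InjOn c C)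
    (h₂ : ∃ C, Circuit (M₂ ↾ (M₂.E \ M₁.E)) C ∧ Set.InjOn c C) :
    ∃ C₁ C₂, SRCP M c C₁ C₂ := by
  obtain ⟨n, φ, hφ⟩ := hM
  obtain ⟨C₁, hC₁T, hC₁, hC₁c, hC₁r⟩ :=
    hsum.exists_rainbow_isCircuit_left hφ hfin hsimple hsize₁ h₁
  obtain ⟨C₂, hC₂T, hC₂, hC₂c, hC₂r⟩ :=
    hsum.symm.exists_rainbow_isCircuit_left hφ hfin hsimple hsize₂ h₂
  have hrk := hsum.rkSet_add_rkSet_le hφ hfin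
  exact ⟨C₁, C₂, ⟨circuit_iff_isCircuit.2 hC₁, hC₁c⟩, ⟨circuit_iff_isCircuit.2 hC₂, hC₂c⟩,
    hsum.disjoint_sdiff.mono hC₁T hC₂T, by omega⟩

end RainbowPaper
end

section
/- Let G be the coloured graph of the inductive construction (G_1 a single edge of colour 1; each G_i obtained from G_{i−1} by adding a new vertex joined by two edges of colour i to two distinct old vertices; G = G_{n−1}). Let u_1, u_2, u_1', u_2' be vertices of G that are pairwise distinct except possibly u_1 = u_2. If u = u_1 = u_2, then there exist two edge-disjoint rainbow paths P_1, P_2 with P_i joining u to u_i' and |P_1| + |P_2| ≤ n − 1. If u_1 ≠ u_2, then there exist two edge-disjoint rainbow paths originating at distinct vertices of {u_1, u_2} and terminating at distinct vertices of {u_1', u_2'} with total length at most n − 2. -/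
open scoped Classical

namespace RainbowPaper

/-- The inductively constructed coloured graph on `n + 2` vertices: vertex `0` and
`1` are `v₁₁` and `v₁₂`, joined by the edge of colour `1`; every vertex `i ≥ 2` is
joined to the two distinct earlier vertices `f i` and `g i` by two edges of colour
`i`.  (Since each edge joins a vertex to a strictly smaller one, the colour of an
edge is the larger of its two endpoints.) -/
def constructionGraph (n : ℕ) (f g : Fin (n + 2) → Fin (n + 2)) :
    SimpleGraph (Fin (n + 2)) where
  Adj a b := a ≠ b ∧ (s(a, b) = s(0, 1) ∨
    ∃ i : Fin (n + 2), 2 ≤ i.val ∧ (s(a, b) = s(i, f i) ∨ s(a, b) = s(i, g i)))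
  symm := by
    constructor
    rintro a b ⟨h1, h2⟩
    refine ⟨h1.symm, ?_⟩
    rw [Sym2.eq_swap]
    exact h2
  loopless := ⟨fun a h => h.1 rfl⟩

/-- The hypotheses of the construction: each new vertex `i ≥ 2` is joined to two
distinct earlier vertices. -/
def ConstructionHyp (n : ℕ) (f g : Fin (n + 2) → Fin (n + 2)) : Prop :=
  ∀ i : Fin (n + 2), 2 ≤ i.val → f i < i ∧ g i < i ∧ f i ≠ g i

/-- The colour of an edge of the construction graph: the larger of its two
endpoints (with the initial edge `{0, 1}` getting colour `1`). -/
def edgeColour {n : ℕ} : Sym2 (Fin (n + 2)) → ℕ :=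
  Sym2.lift ⟨fun a b => max a.val b.val, fun a b => by simp [max_comm]⟩

/-- A rainbow path: a path whose edges receive pairwise distinct colours. -/
def IsRainbowPath {V : Type*} (G : SimpleGraph V) (col : Sym2 V → ℕ) {u v : V}
    (p : G.Walk u v) : Prop :=
  p.IsPath ∧ (p.edges.map col).Nodup

/-- Two walks are edge-disjoint if no edge lies on both. -/
def EdgeDisjoint {V : Type*} {G : SimpleGraph V} {u v u' v' : V}
    (p : G.Walk u v) (q : G.Walk u' v') : Prop :=
  ∀ e, e ∈ p.edges → e ∉ q.edges

/-!
Induction along the construction. Inside `G_m` every edge has colour at most `m`, while the two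
edges at the newest vertex `T = m + 1` both have colour `m + 1`. So a rainbow path of `G_m` stays
rainbow when prolonged by one edge at `T`, and no path of `G_m` uses an edge at `T`. When `T` is
one of the prescribed endpoints, it is replaced by a neighbour of `T` (by both neighbours when `T`
is the common source of two paths), the induction hypothesis is applied in `G_m`, and the edges
at `T` are added back. The induction closes because the claims are proved with sources allowed
to coincide with targets (the corresponding path being trivial): the neighbour of `T` may be one
of the other endpoints.
-/

open SimpleGraph

section Walks

variable {V : Type*} {G : SimpleGraph V} {col : Sym2 V → ℕ} {u v w u' v' : V}
  {p : G.Walk u v} {q : G.Walk u' v'}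

lemma isRainbowPath_nil : IsRainbowPath G col (Walk.nil : G.Walk u u) :=
  ⟨Walk.IsPath.nil, by simp⟩

lemma isRainbowPath_toWalk (h : G.Adj u v) : IsRainbowPath G col h.toWalk :=
  ⟨h.isPath_toWalk, by simp [Adj.toWalk]⟩

lemma IsRainbowPath.reverse (hp : IsRainbowPath G col p) : IsRainbowPath G col p.reverse :=
  ⟨hp.1.reverse, by rw [Walk.edges_reverse, List.map_reverse]; exact List.nodup_reverse.2 hp.2⟩

lemma edgeDisjoint_nil_left : EdgeDisjoint (Walk.nil : G.Walk u u) q := by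
  simp [EdgeDisjoint]

lemma EdgeDisjoint.symm (h : EdgeDisjoint p q) : EdgeDisjoint q p :=
  fun e he he' => h e he' he

lemma EdgeDisjoint.reverse (h : EdgeDisjoint p q) : EdgeDisjoint p.reverse q.reverse := by
  intro e
  simpa only [Walk.edges_reverse, List.mem_reverse] using h e

lemma EdgeDisjoint.cons_left (h : EdgeDisjoint p q) (hw : G.Adj w u) (he : s(w, u) ∉ q.edges) :
    EdgeDisjoint (Walk.cons hw p) q := by
  intro e
  rw [Walk.edges_cons, List.mem_cons]
  rintro (rfl | he')
  exacts [he, h e he']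

end Walks

section Levels

variable {n m m' L L' : ℕ} {G : SimpleGraph (Fin (n + 2))} {u v T a b x y : Fin (n + 2)}

/-- `p` lies in the graph `G_m` of the construction, whose vertices are `0, …, m`. -/
def SupportLE (m : ℕ) (p : G.Walk u v) : Prop :=
  ∀ z ∈ p.support, z.val ≤ m

lemma supportLE_nil : SupportLE m (Walk.nil : G.Walk u u) ↔ u.val ≤ m := by
  simp [SupportLE]

lemma supportLE_cons {h : G.Adj T u} {p : G.Walk u v} :
    SupportLE m (Walk.cons h p) ↔ T.val ≤ m ∧ SupportLE m p := by
  simp [SupportLE]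

namespace SupportLE

variable {p : G.Walk u v}

lemma mono (hp : SupportLE m p) (h : m ≤ m') : SupportLE m' p :=
  fun z hz => (hp z hz).trans h

lemma reverse (hp : SupportLE m p) : SupportLE m p.reverse :=
  fun z hz => hp z (by simpa using hz)

lemma edgeColour_le (hp : SupportLE m p) {e : Sym2 (Fin (n + 2))} (he : e ∈ p.edges) :
    edgeColour e ≤ m := by
  induction e using Sym2.ind with
  | _ c d =>
    exact max_le (hp c (p.fst_mem_support_of_mem_edges he))
      (hp d (p.snd_mem_support_of_mem_edges he))

lemma mk_notMem_edges (hp : SupportLE m p) (hT : m < T.val) (c : Fin (n + 2)) :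
    s(T, c) ∉ p.edges :=
  fun he => (hp T (p.fst_mem_support_of_mem_edges he)).not_gt hT

end SupportLE

/-- The new edge has colour at least `T`, larger than every colour on `p`. -/
lemma IsRainbowPath.cons {p : G.Walk u v} (hp : IsRainbowPath G edgeColour p)
    (hs : SupportLE m p) (h : G.Adj T u) (hT : m < T.val) :
    IsRainbowPath G edgeColour (Walk.cons h p) := by
  refine ⟨(Walk.cons_isPath_iff h p).2 ⟨hp.1, fun hTp => (hs T hTp).not_gt hT⟩, ?_⟩
  rw [Walk.edges_cons, List.map_cons, List.nodup_cons]
  refine ⟨fun hmem => ?_, hp.2⟩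
  obtain ⟨e, he, hcol⟩ := List.mem_map.1 hmem
  have hnew : T.val ≤ edgeColour s(T, u) := le_max_left _ _
  have := hs.edgeColour_le he
  omega

def RainbowPair (G : SimpleGraph (Fin (n + 2))) (m L : ℕ) (a x b y : Fin (n + 2)) : Prop :=
  ∃ (P : G.Walk a x) (Q : G.Walk b y), IsRainbowPath G edgeColour P ∧
    IsRainbowPath G edgeColour Q ∧ EdgeDisjoint P Q ∧ SupportLE m P ∧ SupportLE m Q ∧
    P.length + Q.length ≤ L

namespace RainbowPair

lemma nil_left {q : G.Walk b y} (hq : IsRainbowPath G edgeColour q) (hs : SupportLE m q)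
    (ha : a.val ≤ m) : RainbowPair G m q.length a a b y :=
  ⟨.nil, q, isRainbowPath_nil, hq, edgeDisjoint_nil_left, supportLE_nil.2 ha, hs, by simp⟩

lemma mono (h : RainbowPair G m L a x b y) (hm : m ≤ m') (hL : L ≤ L') :
    RainbowPair G m' L' a x b y :=
  let ⟨P, Q, hP, hQ, hPQ, hsP, hsQ, hl⟩ := h
  ⟨P, Q, hP, hQ, hPQ, hsP.mono hm, hsQ.mono hm, hl.trans hL⟩

lemma symm (h : RainbowPair G m L a x b y) : RainbowPair G m L b y a x :=
  let ⟨P, Q, hP, hQ, hPQ, hsP, hsQ, hl⟩ := h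
  ⟨Q, P, hQ, hP, hPQ.symm, hsQ, hsP, by omega⟩

lemma reverse (h : RainbowPair G m L a x b y) : RainbowPair G m L x a y b :=
  let ⟨P, Q, hP, hQ, hPQ, hsP, hsQ, hl⟩ := h
  ⟨P.reverse, Q.reverse, hP.reverse, hQ.reverse, hPQ.reverse, hsP.reverse, hsQ.reverse,
    by simpa using hl⟩

lemma cons_left (h : RainbowPair G m L a x b y) (hT : T.val = m + 1) (hTa : G.Adj T a) :
    RainbowPair G (m + 1) (L + 1) T x b y := by
  obtain ⟨P, Q, hP, hQ, hPQ, hsP, hsQ, hl⟩ := h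
  refine ⟨.cons hTa P, Q, hP.cons hsP hTa (by omega), hQ,
    hPQ.cons_left hTa (hsQ.mk_notMem_edges (by omega) a),
    supportLE_cons.2 ⟨hT.le, hsP.mono m.le_succ⟩, hsQ.mono m.le_succ, ?_⟩
  simp only [Walk.length_cons]
  omega

lemma cons_cons (h : RainbowPair G m L a x b y) (hT : T.val = m + 1) (hTa : G.Adj T a)
    (hTb : G.Adj T b) (hab : a ≠ b) : RainbowPair G (m + 1) (L + 2) T x T y := by
  obtain ⟨P, Q, hP, hQ, hPQ, hsP, hsQ, hl⟩ := h
  have hTbP : s(T, b) ∉ (Walk.cons hTa P).edges := by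
    rw [Walk.edges_cons, List.mem_cons, not_or, Sym2.congr_right]
    exact ⟨hab.symm, hsP.mk_notMem_edges (by omega) b⟩
  refine ⟨.cons hTa P, .cons hTb Q, hP.cons hsP hTa (by omega), hQ.cons hsQ hTb (by omega),
    ((hPQ.cons_left hTa (hsQ.mk_notMem_edges (by omega) a)).symm.cons_left hTb hTbP).symm,
    supportLE_cons.2 ⟨hT.le, hsP.mono m.le_succ⟩,
    supportLE_cons.2 ⟨hT.le, hsQ.mono m.le_succ⟩, ?_⟩
  simp only [Walk.length_cons]
  omega

end RainbowPair

def RainbowLinkage (G : SimpleGraph (Fin (n + 2))) (m L : ℕ) (a b x y : Fin (n + 2)) : Prop :=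
  RainbowPair G m L a x b y ∨ RainbowPair G m L a y b x

namespace RainbowLinkage

lemma mono (h : RainbowLinkage G m L a b x y) (hm : m ≤ m') (hL : L ≤ L') :
    RainbowLinkage G m' L' a b x y :=
  h.imp (·.mono hm hL) (·.mono hm hL)

lemma swap_sources (h : RainbowLinkage G m L a b x y) : RainbowLinkage G m L b a x y :=
  h.symm.imp (·.symm) (·.symm)

lemma reverse (h : RainbowLinkage G m L a b x y) : RainbowLinkage G m L x y a b :=
  h.imp (·.reverse) (·.reverse.symm)

lemma cons_left (h : RainbowLinkage G m L a b x y) (hT : T.val = m + 1) (hTa : G.Adj T a) :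
    RainbowLinkage G (m + 1) (L + 1) T b x y :=
  h.imp (·.cons_left hT hTa) (·.cons_left hT hTa)

end RainbowLinkage

def HasRainbowPaths (G : SimpleGraph (Fin (n + 2))) (m : ℕ) : Prop :=
  ∀ u v : Fin (n + 2), u ≠ v → u.val ≤ m → v.val ≤ m →
    ∃ p : G.Walk u v, IsRainbowPath G edgeColour p ∧ SupportLE m p ∧
      p.length ≤ max (m - 1) 1

def HasRainbowFans (G : SimpleGraph (Fin (n + 2))) (m : ℕ) : Prop :=
  ∀ u x y : Fin (n + 2), x ≠ y → u.val ≤ m → x.val ≤ m → y.val ≤ m →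
    RainbowPair G m m u x u y

def HasRainbowLinkages (G : SimpleGraph (Fin (n + 2))) (m : ℕ) : Prop :=
  ∀ a b x y : Fin (n + 2), a ≠ b → x ≠ y →
    a.val ≤ m → b.val ≤ m → x.val ≤ m → y.val ≤ m →
      RainbowLinkage G m (m - 1) a b x y

namespace HasRainbowPaths

lemma rainbowPair_nil_left (hP : HasRainbowPaths G m) (hby : b ≠ y) (ha : a.val ≤ m)
    (hb : b.val ≤ m) (hy : y.val ≤ m) : RainbowPair G m (max (m - 1) 1) a a b y :=
  let ⟨_, hq, hs, hl⟩ := hP b y hby hb hy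
  (RainbowPair.nil_left hq hs ha).mono le_rfl hl

lemma rainbowPair_nil_left_of_ne (hP : HasRainbowPaths G m) (hab : a ≠ b) (hay : a ≠ y)
    (ha : a.val ≤ m) (hb : b.val ≤ m) (hy : y.val ≤ m) : RainbowPair G m (m - 1) a a b y := by
  rcases eq_or_ne b y with rfl | hby
  · exact (RainbowPair.nil_left isRainbowPath_nil (supportLE_nil.2 hb) ha).mono le_rfl (by simp)
  · exact (hP.rainbowPair_nil_left hby ha hb hy).mono le_rfl (by omega)

lemma rainbowLinkage_of_overlap (hP : HasRainbowPaths G m) (hab : a ≠ b) (hxy : x ≠ y)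
    (ha : a.val ≤ m) (hb : b.val ≤ m) (hx : x.val ≤ m) (hy : y.val ≤ m)
    (h : a = x ∨ a = y ∨ b = x ∨ b = y) : RainbowLinkage G m (m - 1) a b x y := by
  rcases h with rfl | rfl | rfl | rfl
  · exact .inl (hP.rainbowPair_nil_left_of_ne hab hxy ha hb hy)
  · exact .inr (hP.rainbowPair_nil_left_of_ne hab hxy.symm ha hb hx)
  · exact .inr (hP.rainbowPair_nil_left_of_ne hab.symm hxy hb ha hy).symm
  · exact .inl (hP.rainbowPair_nil_left_of_ne hab.symm hxy.symm hb ha hx).symm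

end HasRainbowPaths

end Levels

section Construction

variable {n t : ℕ} {f g : Fin (n + 2) → Fin (n + 2)} {T u v a b x y : Fin (n + 2)}

local notation "G" => constructionGraph n f g

lemma constructionGraph_adj_of_le_one (hu : u.val ≤ 1) (hv : v.val ≤ 1) (huv : u ≠ v) :
    (G).Adj u v := by
  refine ⟨huv, .inl ?_⟩
  obtain ⟨rfl, rfl⟩ | ⟨rfl, rfl⟩ : (u = 0 ∧ v = 1) ∨ (u = 1 ∧ v = 0) := by
    simp only [Fin.ext_iff, Fin.val_zero, Fin.val_one]
    omega
  exacts [rfl, Sym2.eq_swap]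

namespace ConstructionHyp

lemma adj_left (hfg : ConstructionHyp n f g) (hT : 2 ≤ T.val) : (G).Adj T (f T) :=
  ⟨(hfg T hT).1.ne', .inr ⟨T, hT, .inl rfl⟩⟩

lemma adj_right (hfg : ConstructionHyp n f g) (hT : 2 ≤ T.val) : (G).Adj T (g T) :=
  ⟨(hfg T hT).2.1.ne', .inr ⟨T, hT, .inr rfl⟩⟩

lemma exists_adj_ne (hfg : ConstructionHyp n f g) (hT : 2 ≤ T.val) (v : Fin (n + 2)) :
    ∃ c, (G).Adj T c ∧ c < T ∧ c ≠ v := by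
  by_cases hf : f T = v
  · exact ⟨g T, hfg.adj_right hT, (hfg T hT).2.1, fun h => (hfg T hT).2.2 (hf.trans h.symm)⟩
  · exact ⟨f T, hfg.adj_left hT, (hfg T hT).1, hf⟩

lemma exists_rainbowPath_of_top (hfg : ConstructionHyp n f g) (hP : HasRainbowPaths G t)
    (hT : T.val = t + 1) (ht : 1 ≤ t) (hv : v.val ≤ t) :
    ∃ p : (G).Walk T v, IsRainbowPath G edgeColour p ∧ SupportLE (t + 1) p ∧
      p.length ≤ t := by
  have hT2 : 2 ≤ T.val := by omega
  obtain ⟨hfT, hgT, hfgT⟩ := hfg T hT2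
  obtain ⟨c, hc, q, hq, hs, hl⟩ : ∃ (c : Fin (n + 2)) (_ : (G).Adj T c) (q : (G).Walk c v),
      IsRainbowPath G edgeColour q ∧ SupportLE t q ∧ q.length < t := by
    rcases em (v = f T ∨ v = g T) with (rfl | rfl) | hfgv
    · exact ⟨_, hfg.adj_left hT2, .nil, isRainbowPath_nil, supportLE_nil.2 hv, by simp; omega⟩
    · exact ⟨_, hfg.adj_right hT2, .nil, isRainbowPath_nil, supportLE_nil.2 hv, by simp; omega⟩
    · obtain ⟨q, hq, hs, hl⟩ := hP (f T) v (by omega) (by omega) hv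
      exact ⟨_, hfg.adj_left hT2, q, hq, hs, by omega⟩
  refine ⟨.cons hc q, hq.cons hs hc (by omega),
    supportLE_cons.2 ⟨hT.le, hs.mono t.le_succ⟩, ?_⟩
  simp only [Walk.length_cons]
  omega

theorem hasRainbowPaths (hfg : ConstructionHyp n f g) : ∀ m, HasRainbowPaths G m
  | 0 => fun u v huv hu hv => absurd huv (by omega)
  | t + 1 => by
    have ih := hfg.hasRainbowPaths t
    intro u v huv hu hv
    by_cases hlow : u.val ≤ t ∧ v.val ≤ t
    · obtain ⟨p, hp, hs, hl⟩ := ih u v huv hlow.1 hlow.2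
      exact ⟨p, hp, hs.mono t.le_succ, hl.trans (by omega)⟩
    rcases Nat.eq_zero_or_pos t with rfl | ht
    · have h : (G).Adj u v := constructionGraph_adj_of_le_one hu hv huv
      exact ⟨h.toWalk, isRainbowPath_toWalk h, by simp [SupportLE, hu, hv], by simp⟩
    rcases not_and_or.1 hlow with hu' | hv'
    · obtain ⟨p, hp, hs, hl⟩ := hfg.exists_rainbowPath_of_top ih (T := u) (by omega) ht
        (by omega : v.val ≤ t)
      exact ⟨p, hp, hs, by omega⟩
    · obtain ⟨p, hp, hs, hl⟩ := hfg.exists_rainbowPath_of_top ih (T := v) (by omega) ht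
        (by omega : u.val ≤ t)
      exact ⟨p.reverse, hp.reverse, hs.reverse, by simp; omega⟩

lemma rainbowLinkage_of_source_top (hfg : ConstructionHyp n f g) (hL : HasRainbowLinkages G t)
    (hT : T.val = t + 1) (hxy : x ≠ y) (hb : b.val ≤ t) (hx : x.val ≤ t) (hy : y.val ≤ t) :
    RainbowLinkage G (t + 1) t T b x y := by
  obtain ⟨c, hc, hcT, hcb⟩ := hfg.exists_adj_ne (T := T) (by omega) b
  exact ((hL c b x y hcb hxy (by omega) hb hx hy).cons_left hT hc).mono le_rfl (by omega)

lemma hasRainbowLinkages_succ (hfg : ConstructionHyp n f g) (hL : HasRainbowLinkages G t) :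
    HasRainbowLinkages G (t + 1) := by
  have htargets_low : ∀ a b x y : Fin (n + 2), a ≠ b → x ≠ y →
      a.val ≤ t + 1 → b.val ≤ t + 1 → x.val ≤ t → y.val ≤ t →
        RainbowLinkage G (t + 1) t a b x y := by
    intro a b x y hab hxy ha hb hx hy
    by_cases hlow : a.val ≤ t ∧ b.val ≤ t
    · exact (hL a b x y hab hxy hlow.1 hlow.2 hx hy).mono t.le_succ (by omega)
    rcases not_and_or.1 hlow with ha' | hb'
    · exact hfg.rainbowLinkage_of_source_top hL (by omega) hxy (by omega) hx hy
    · exact (hfg.rainbowLinkage_of_source_top hL (T := b) (by omega) hxy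
        (by omega : a.val ≤ t) hx hy).swap_sources
  intro a b x y hab hxy ha hb hx hy
  by_cases htargets : x.val ≤ t ∧ y.val ≤ t
  · exact htargets_low a b x y hab hxy ha hb htargets.1 htargets.2
  by_cases hsources : a.val ≤ t ∧ b.val ≤ t
  · exact (htargets_low x y a b hxy hab hx hy hsources.1 hsources.2).reverse
  exact (hfg.hasRainbowPaths (t + 1)).rainbowLinkage_of_overlap hab hxy ha hb hx hy (by omega)

lemma rainbowPair_of_source_top (hfg : ConstructionHyp n f g) (hL : HasRainbowLinkages G t)
    (hT : T.val = t + 1) (hxy : x ≠ y) (hx : x.val ≤ t) (hy : y.val ≤ t) :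
    RainbowPair G (t + 1) (t + 1) T x T y := by
  have hT2 : 2 ≤ T.val := by omega
  obtain ⟨hfT, hgT, hfgT⟩ := hfg T hT2
  rcases hL (f T) (g T) x y hfgT hxy (by omega) (by omega) hx hy with h | h
  · exact (h.cons_cons hT (hfg.adj_left hT2) (hfg.adj_right hT2) hfgT).mono le_rfl (by omega)
  · exact (h.cons_cons hT (hfg.adj_left hT2) (hfg.adj_right hT2) hfgT).symm.mono le_rfl (by omega)

lemma rainbowPair_of_target_top (hfg : ConstructionHyp n f g) (hF : HasRainbowFans G t)
    (hT : T.val = t + 1) (ht : 1 ≤ t) (hu : u.val ≤ t) (hy : y.val ≤ t) :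
    RainbowPair G (t + 1) (t + 1) u T u y := by
  obtain ⟨c, hc, hcT, hcy⟩ := hfg.exists_adj_ne (T := T) (by omega) y
  exact ((hF u c y hcy hu (by omega) hy).reverse.cons_left hT hc).reverse

lemma hasRainbowFans_succ (hfg : ConstructionHyp n f g) (hF : HasRainbowFans G t)
    (hL : HasRainbowLinkages G t) : HasRainbowFans G (t + 1) := by
  have hP := hfg.hasRainbowPaths (t + 1)
  intro u x y hxy hu hx hy
  by_cases hux : u = x
  · subst hux
    exact (hP.rainbowPair_nil_left hxy hu hu hy).mono le_rfl (by omega)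
  by_cases huy : u = y
  · subst huy
    exact (hP.rainbowPair_nil_left hxy.symm hu hu hx).symm.mono le_rfl (by omega)
  by_cases hlow : u.val ≤ t ∧ x.val ≤ t ∧ y.val ≤ t
  · exact (hF u x y hxy hlow.1 hlow.2.1 hlow.2.2).mono t.le_succ t.le_succ
  by_cases hu' : u.val ≤ t
  · by_cases hx' : x.val ≤ t
    · exact (hfg.rainbowPair_of_target_top hF (T := y) (by omega) (by omega) (by omega) hx').symm
    · exact hfg.rainbowPair_of_target_top hF (T := x) (by omega) (by omega) (by omega) (by omega)
  · exact hfg.rainbowPair_of_source_top hL (by omega) hxy (by omega) (by omega)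

theorem hasRainbowFans_and_hasRainbowLinkages (hfg : ConstructionHyp n f g) :
    ∀ m, HasRainbowFans G m ∧ HasRainbowLinkages G m
  | 0 => ⟨fun _ _ _ hxy _ _ _ => absurd hxy (by omega),
      fun _ _ _ _ hab _ _ _ _ _ => absurd hab (by omega)⟩
  | t + 1 =>
    let ⟨hF, hL⟩ := hfg.hasRainbowFans_and_hasRainbowLinkages t
    ⟨hfg.hasRainbowFans_succ hF hL, hfg.hasRainbowLinkages_succ hL⟩

end ConstructionHyp

end Construction

theorem two_disjoint_rainbow_paths_general (n : ℕ) (f g : Fin (n + 2) → Fin (n + 2))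
    (hfg : ConstructionHyp n f g) (u₁ u₂ u₁' u₂' : Fin (n + 2))
    (h12' : u₁' ≠ u₂') :
    (u₁ = u₂ →
      ∃ (P₁ : (constructionGraph n f g).Walk u₁ u₁')
        (P₂ : (constructionGraph n f g).Walk u₁ u₂'),
        IsRainbowPath _ edgeColour P₁ ∧ IsRainbowPath _ edgeColour P₂ ∧
        EdgeDisjoint P₁ P₂ ∧ P₁.length + P₂.length ≤ n + 1) ∧
    (u₁ ≠ u₂ →
      ∃ (b : Bool) (P₁ : (constructionGraph n f g).Walk u₁ (cond b u₁' u₂'))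
        (P₂ : (constructionGraph n f g).Walk u₂ (cond b u₂' u₁')),
        IsRainbowPath _ edgeColour P₁ ∧ IsRainbowPath _ edgeColour P₂ ∧
        EdgeDisjoint P₁ P₂ ∧ P₁.length + P₂.length ≤ n) := by
  obtain ⟨hfans, hlinkages⟩ := hfg.hasRainbowFans_and_hasRainbowLinkages (n + 1)
  have hle : ∀ v : Fin (n + 2), v.val ≤ n + 1 := fun v => by omega
  refine ⟨fun _ => ?_, fun h12 => ?_⟩
  · obtain ⟨P₁, P₂, h₁, h₂, hd, -, -, hl⟩ :=
      hfans u₁ u₁' u₂' h12' (hle _) (hle _) (hle _)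
    exact ⟨P₁, P₂, h₁, h₂, hd, hl⟩
  · rcases hlinkages u₁ u₂ u₁' u₂' h12 h12' (hle _) (hle _) (hle _) (hle _) with
      ⟨P₁, P₂, h₁, h₂, hd, -, -, hl⟩ | ⟨P₁, P₂, h₁, h₂, hd, -, -, hl⟩
    exacts [⟨true, P₁, P₂, h₁, h₂, hd, hl⟩, ⟨false, P₁, P₂, h₁, h₂, hd, hl⟩]

/-- in the construction graph on `n + 2` vertices, given vertices
`u₁, u₂, u₁', u₂'` pairwise distinct except possibly `u₁ = u₂`: if `u₁ = u₂ = u`,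
there are edge-disjoint rainbow paths from `u` to `u₁'` and to `u₂'` of total
length at most `(n+2) - 1`; if `u₁ ≠ u₂`, there are edge-disjoint rainbow paths
originating at distinct vertices of `{u₁, u₂}` and terminating at distinct
vertices of `{u₁', u₂'}` of total length at most `(n+2) - 2`. -/
theorem two_disjoint_rainbow_paths (n : ℕ) (f g : Fin (n + 2) → Fin (n + 2))
    (hfg : ConstructionHyp n f g) (u₁ u₂ u₁' u₂' : Fin (n + 2))
    (h12' : u₁' ≠ u₂') (h11' : u₁ ≠ u₁') (h12 : u₁ ≠ u₂')
    (h21' : u₂ ≠ u₁') (h22' : u₂ ≠ u₂') :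
    (u₁ = u₂ →
      ∃ (P₁ : (constructionGraph n f g).Walk u₁ u₁')
        (P₂ : (constructionGraph n f g).Walk u₁ u₂'),
        IsRainbowPath _ edgeColour P₁ ∧ IsRainbowPath _ edgeColour P₂ ∧
        EdgeDisjoint P₁ P₂ ∧ P₁.length + P₂.length ≤ n + 1) ∧
    (u₁ ≠ u₂ →
      ∃ (b : Bool) (P₁ : (constructionGraph n f g).Walk u₁ (cond b u₁' u₂'))
        (P₂ : (constructionGraph n f g).Walk u₂ (cond b u₂' u₁')),
        IsRainbowPath _ edgeColour P₁ ∧ IsRainbowPath _ edgeColour P₂ ∧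
        EdgeDisjoint P₁ P₂ ∧ P₁.length + P₂.length ≤ n) :=
  two_disjoint_rainbow_paths_general n f g hfg u₁ u₂ u₁' u₂' h12'

end RainbowPaper
end
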